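/- arXiv:1305.1379 — 3 statements merged into one kernel-verified Lean document; each statement's English description precedes it below -/
import Mathlib

section
/- (Alexander's trick.) Let D = {z ∈ ℂ : |z| ≤ 1} be the closed unit disk and let h : D → D be a homeomorphism with h(x) = x for every x ∈ D with |x| = 1. Then h is isotopic to the identity rel boundary: there exists a continuous map F : [0,1] × D → D such that F(0,·) = h, F(1,·) = id, F(t,·) : D → D is a homeomorphism for every t ∈ [0,1], and F(t,x) = x for every t ∈ [0,1] and every x with |x| = 1. -/
/-!
Extend `h` by the identity to a homeomorphism `f` of the whole space. For `0 < s ≤ 1` the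
conjugate `z ↦ s • f (s⁻¹ • z)` is `h` shrunk into the ball of radius `s` and the identity
outside it; it moves no point by more than `2 s`, so it tends to the identity as `s → 0`.
Letting `s` run from `1` down to `0` gives the isotopy.
-/

open unitInterval

open Set Metric Filter Topology

namespace Set

variable {X : Type*} {s : Set X}

noncomputable def extendById (s : Set X) (h : s → s) (z : X) : X :=
  open scoped Classical in if hz : z ∈ s then h ⟨z, hz⟩ else z

theorem extendById_of_mem (h : s → s) {z : X} (hz : z ∈ s) : extendById s h z = h ⟨z, hz⟩ :=
  open scoped Classical in dif_pos hz

theorem extendById_of_notMem (h : s → s) {z : X} (hz : z ∉ s) : extendById s h z = z :=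
  open scoped Classical in dif_neg hz

theorem extendById_leftInverse {h g : s → s} (hgh : Function.LeftInverse g h) :
    Function.LeftInverse (extendById s g) (extendById s h) := by
  intro z
  by_cases hz : z ∈ s
  · rw [extendById_of_mem h hz, extendById_of_mem g (h ⟨z, hz⟩).2, Subtype.coe_eta, hgh]
  · rw [extendById_of_notMem h hz, extendById_of_notMem g hz]

theorem continuous_extendById [TopologicalSpace X] (hs : IsClosed s) {h : s → s}
    (hc : Continuous h) (hfix : ∀ x : s, (x : X) ∈ frontier s → h x = x) :
    Continuous (extendById s h) := by
  have hon_s : ContinuousOn (extendById s h) s := by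
    rw [continuousOn_iff_continuous_domRestrict]
    convert continuous_subtype_val.comp hc using 1
    funext x
    exact extendById_of_mem h x.2
  have hon_compl : ContinuousOn (extendById s h) (closure sᶜ) := by
    refine continuousOn_id.congr fun z hz => ?_
    by_cases hzs : z ∈ s
    · have hfr : z ∈ frontier s := by
        rw [frontier_eq_closure_inter_closure, hs.closure_eq]
        exact ⟨hzs, hz⟩
      rw [extendById_of_mem h hzs, hfix ⟨z, hzs⟩ hfr, id]
    · exact extendById_of_notMem h hzs
  rw [← continuousOn_univ, ← union_compl_self s]
  exact (hon_s.union_of_isClosed hon_compl hs isClosed_closure).mono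
    (union_subset_union_right s subset_closure)

end Set

namespace Homeomorph

variable {X : Type*} [TopologicalSpace X] {s : Set X}

noncomputable def extendById (h : s ≃ₜ s) (hs : IsClosed s)
    (hfix : ∀ x : s, (x : X) ∈ frontier s → h x = x) : X ≃ₜ X where
  toFun := s.extendById h
  invFun := s.extendById h.symm
  left_inv := extendById_leftInverse h.left_inv
  right_inv := extendById_leftInverse h.right_inv
  continuous_toFun := continuous_extendById hs h.continuous hfix
  continuous_invFun := continuous_extendById hs h.symm.continuous fun x hx => by
    rw [h.symm_apply_eq, hfix x hx]

theorem extendById_apply (h : s ≃ₜ s) (hs : IsClosed s)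
    (hfix : ∀ x : s, (x : X) ∈ frontier s → h x = x) (z : X) :
    h.extendById hs hfix z = s.extendById h z :=
  rfl

variable {E : Type*} [NormedAddCommGroup E]

theorem norm_apply_sub_le_two {f : E ≃ₜ E} (hfix : ∀ w, 1 ≤ ‖w‖ → f w = w)
    (hmaps : MapsTo f (closedBall 0 1) (closedBall 0 1)) (w : E) : ‖f w - w‖ ≤ 2 := by
  rcases le_or_gt 1 ‖w‖ with hw | hw
  · simp [hfix w hw]
  calc ‖f w - w‖ ≤ ‖f w‖ + ‖w‖ := norm_sub_le _ _
    _ ≤ 1 + 1 := add_le_add (mem_closedBall_zero_iff.1 (hmaps (mem_closedBall_zero_iff.2 hw.le)))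
        hw.le
    _ = 2 := one_add_one_eq_two

variable [NormedSpace ℝ E]

noncomputable def rescale (f : E ≃ₜ E) (s : ℝ) : E ≃ₜ E :=
  open scoped Classical in
  if hs : s = 0 then Homeomorph.refl E
  else (Homeomorph.smulOfNeZero s⁻¹ (inv_ne_zero hs)).trans (f.trans (.smulOfNeZero s hs))

variable (f : E ≃ₜ E) {s : ℝ} {z : E}

theorem rescale_apply_of_ne_zero (hs : s ≠ 0) : f.rescale s z = s • f (s⁻¹ • z) := by
  simp [rescale, hs]

@[simp]
theorem rescale_zero_apply : f.rescale 0 z = z := by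
  simp [rescale]

@[simp]
theorem rescale_one_apply : f.rescale 1 z = f z := by
  simp [rescale_apply_of_ne_zero]

variable {f}

theorem rescale_apply_eq_self (hfix : ∀ w, 1 ≤ ‖w‖ → f w = w) (hz : |s| ≤ ‖z‖) :
    f.rescale s z = z := by
  rcases eq_or_ne s 0 with rfl | hs
  · exact rescale_zero_apply f
  have hw : 1 ≤ ‖s⁻¹ • z‖ := by
    rw [norm_smul, norm_inv, Real.norm_eq_abs, inv_mul_eq_div, one_le_div (abs_pos.2 hs)]
    exact hz
  rw [rescale_apply_of_ne_zero f hs, hfix _ hw, smul_inv_smul₀ hs]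

theorem norm_rescale_apply_le (hmaps : MapsTo f (closedBall 0 1) (closedBall 0 1))
    (hz : ‖z‖ ≤ |s|) : ‖f.rescale s z‖ ≤ |s| := by
  rcases eq_or_ne s 0 with rfl | hs
  · simpa using hz
  have hw : s⁻¹ • z ∈ closedBall (0 : E) 1 := by
    rw [mem_closedBall_zero_iff, norm_smul, norm_inv, Real.norm_eq_abs,
      inv_mul_le_one₀ (abs_pos.2 hs)]
    exact hz
  rw [rescale_apply_of_ne_zero f hs, norm_smul, Real.norm_eq_abs]
  exact mul_le_of_le_one_right (abs_nonneg s) (mem_closedBall_zero_iff.1 (hmaps hw))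

theorem rescale_apply_mem_closedBall_iff (hfix : ∀ w, 1 ≤ ‖w‖ → f w = w)
    (hmaps : MapsTo f (closedBall 0 1) (closedBall 0 1)) (hs : |s| ≤ 1) :
    f.rescale s z ∈ closedBall 0 1 ↔ z ∈ closedBall 0 1 := by
  rcases le_or_gt |s| ‖z‖ with hz | hz
  · rw [rescale_apply_eq_self hfix hz]
  simp only [mem_closedBall_zero_iff]
  exact iff_of_true ((norm_rescale_apply_le hmaps hz.le).trans hs) (hz.le.trans hs)

theorem norm_rescale_apply_sub_le {C : ℝ} (hC : ∀ w, ‖f w - w‖ ≤ C) :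
    ‖f.rescale s z - z‖ ≤ |s| * C := by
  rcases eq_or_ne s 0 with rfl | hs
  · simp
  calc ‖f.rescale s z - z‖ = ‖s • (f (s⁻¹ • z) - s⁻¹ • z)‖ := by
        rw [rescale_apply_of_ne_zero f hs, smul_sub, smul_inv_smul₀ hs]
    _ ≤ |s| * C := by
        rw [norm_smul, Real.norm_eq_abs]
        exact mul_le_mul_of_nonneg_left (hC _) (abs_nonneg s)

theorem continuous_rescale {C : ℝ} (hC : ∀ w, ‖f w - w‖ ≤ C) :
    Continuous fun p : ℝ × E => f.rescale p.1 p.2 := by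
  refine continuous_iff_continuousAt.2 fun ⟨s₀, z₀⟩ => ?_
  rcases eq_or_ne s₀ 0 with rfl | hs₀
  · have hsub : Tendsto (fun p : ℝ × E => f.rescale p.1 p.2 - p.2) (𝓝 (0, z₀)) (𝓝 0) := by
      refine squeeze_zero_norm (fun p => norm_rescale_apply_sub_le hC) ?_
      have hbound : Continuous fun p : ℝ × E => |p.1| * C := by fun_prop
      simpa using hbound.tendsto (0, z₀)
    simpa [ContinuousAt] using hsub.add (continuous_snd.tendsto ((0 : ℝ), z₀))
  · have hev : (fun p : ℝ × E => p.1 • f (p.1⁻¹ • p.2)) =ᶠ[𝓝 (s₀, z₀)]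
        fun p => f.rescale p.1 p.2 := by
      filter_upwards [continuous_fst.continuousAt.eventually_ne hs₀] with p hp
      exact (rescale_apply_of_ne_zero f hp).symm
    refine ContinuousAt.congr ?_ hev
    exact continuousAt_fst.smul (f.continuous.continuousAt.comp
      ((continuousAt_fst.inv₀ hs₀).smul continuousAt_snd))

end Homeomorph

section closedBall

variable {E : Type*} [NormedAddCommGroup E] [NormedSpace ℝ E]

theorem Homeomorph.exists_extension_of_closedBall
    (h : closedBall (0 : E) 1 ≃ₜ closedBall (0 : E) 1)
    (hbd : ∀ x : closedBall (0 : E) 1, ‖x.val‖ = 1 → h x = x) :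
    ∃ f : E ≃ₜ E, (∀ x : closedBall (0 : E) 1, f x = h x) ∧ ∀ w, 1 ≤ ‖w‖ → f w = w := by
  have hfr : ∀ x : closedBall (0 : E) 1, (x : E) ∈ frontier (closedBall 0 1) → h x = x := by
    intro x hx
    rw [frontier_closedBall _ one_ne_zero, mem_sphere_zero_iff_norm] at hx
    exact hbd x hx
  refine ⟨h.extendById isClosed_closedBall hfr, fun x => extendById_of_mem h x.2, fun w hw => ?_⟩
  rcases hw.eq_or_lt with hw | hw
  · have hmem : w ∈ closedBall (0 : E) 1 := mem_closedBall_zero_iff.2 hw.ge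
    rw [extendById_apply, extendById_of_mem _ hmem, hbd ⟨w, hmem⟩ hw.symm]
  · rw [extendById_apply, extendById_of_notMem]
    simpa using hw

theorem Homeomorph.exists_isotopy_refl_rel_sphere
    (h : closedBall (0 : E) 1 ≃ₜ closedBall (0 : E) 1)
    (hbd : ∀ x : closedBall (0 : E) 1, ‖x.val‖ = 1 → h x = x) :
    ∃ F : I × closedBall (0 : E) 1 → closedBall (0 : E) 1,
      Continuous F ∧
      (∀ x, F (0, x) = h x) ∧
      (∀ x, F (1, x) = x) ∧
      (∀ t : I, IsHomeomorph fun x => F (t, x)) ∧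
      (∀ (t : I) (x : closedBall (0 : E) 1), ‖x.val‖ = 1 → F (t, x) = x) := by
  obtain ⟨f, hfh, hfix⟩ := h.exists_extension_of_closedBall hbd
  have hmaps : MapsTo f (closedBall 0 1) (closedBall 0 1) := fun w hw =>
    (hfh ⟨w, hw⟩).symm ▸ Subtype.prop _
  have hσ (t : I) : |(σ t : ℝ)| ≤ 1 := abs_le.2 ⟨by linarith [nonneg (σ t)], le_one (σ t)⟩
  let shrink (t : I) : closedBall (0 : E) 1 ≃ₜ closedBall (0 : E) 1 :=
    (f.rescale (σ t)).subtype fun _ => (rescale_apply_mem_closedBall_iff hfix hmaps (hσ t)).symm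
  refine ⟨fun p => shrink p.1 p.2, ?_, fun x => ?_, fun x => ?_,
    fun t => (shrink t).isHomeomorph, fun t x hx => ?_⟩
  · refine Topology.IsInducing.subtypeVal.continuous_iff.2 ?_
    exact (continuous_rescale (norm_apply_sub_le_two hfix hmaps)).comp
      ((continuous_subtype_val.comp (continuous_symm.comp continuous_fst)).prodMk
        (continuous_subtype_val.comp continuous_snd))
  · ext
    simpa [shrink] using hfh x
  · ext
    simp [shrink]
  · ext
    exact rescale_apply_eq_self hfix ((hσ t).trans hx.ge)

end closedBall

/-- Alexander's trick: a homeomorphism of the closed unit disk fixing the boundary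
circle pointwise is isotopic to the identity rel boundary. -/
theorem alexander_trick
    (h : Homeomorph (Metric.closedBall (0 : ℂ) 1) (Metric.closedBall (0 : ℂ) 1))
    (hbd : ∀ x : Metric.closedBall (0 : ℂ) 1, ‖x.val‖ = 1 → h x = x) :
    ∃ F : I × Metric.closedBall (0 : ℂ) 1 → Metric.closedBall (0 : ℂ) 1,
      Continuous F ∧
      (∀ x, F (0, x) = h x) ∧
      (∀ x, F (1, x) = x) ∧
      (∀ t : I, IsHomeomorph fun x => F (t, x)) ∧
      (∀ (t : I) (x : Metric.closedBall (0 : ℂ) 1),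
        ‖x.val‖ = 1 → F (t, x) = x) :=
  h.exists_isotopy_refl_rel_sphere hbd
end

section
/- Every orientation-preserving homeomorphism of the closed disk is isotopic to the identity: let D = {z ∈ ℂ : |z| ≤ 1} and let h : D → D be a homeomorphism mapping the unit circle {|z| = 1} onto itself, whose boundary restriction is orientation preserving in the sense that there is a continuous strictly increasing map H : ℝ → ℝ with H(x+1) = H(x)+1 and h(exp(2πix)) = exp(2πi H(x)) for all x ∈ ℝ. Then there exists a continuous map F : [0,1] × D → D such that F(0,·) = h, F(1,·) = id, and F(t,·) : D → D is a homeomorphism for every t ∈ [0,1]. -/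
/-!
Alexander's trick: for `s ∈ [0, 1]`, shrink `h` into the disk of radius `s` and cone its
boundary values radially outside that disk. This is an isotopy from `h` (at `s = 1`) to the cone
`z ↦ |z| h(z / |z|)` (at `s = 0`), and every stage is a homeomorphism, inverted by the same
construction applied to `h⁻¹` because `h` preserves the boundary circle. If `H` lifts `h` on the
circle, that cone is `z ↦ |z| e(H(arg z / 2π))`, and the straight-line path `(1 - t) H + t id`
stays among continuous strictly increasing degree-one lifts, so its cones form an isotopy to the
identity.
-/

open unitInterval Real

open Metric Set Function ContinuousMap

open scoped FourierTransform

noncomputable section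

namespace ContinuousMap

def Isotopic {X Y : Type*} [TopologicalSpace X] [TopologicalSpace Y] (f g : C(X, Y)) : Prop :=
  f.HomotopicWith g fun k => IsHomeomorph k

theorem Isotopic.trans {X Y : Type*} [TopologicalSpace X] [TopologicalSpace Y] {f g k : C(X, Y)}
    (hfg : Isotopic f g) (hgk : Isotopic g k) : Isotopic f k :=
  HomotopicWith.trans hfg hgk

end ContinuousMap

lemma bijOn_closedBall_of_norm_eq {E : Type*} [SeminormedAddGroup E] {g : E → E}
    (hg : Bijective g) (hn : ∀ z, ‖g z‖ = ‖z‖) (r : ℝ) :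
    BijOn g (closedBall 0 r) (closedBall 0 r) := by
  refine ⟨fun z hz => by simpa [hn] using hz, hg.1.injOn, fun w hw => ?_⟩
  obtain ⟨z, rfl⟩ := hg.2 w
  exact ⟨z, by simpa [hn] using hw, rfl⟩

section Alexander

variable {E : Type*} [NormedAddCommGroup E] [NormedSpace ℝ E]

lemma norm_inv_smul_le_one {r : ℝ} {x : E} (h : ‖x‖ ≤ r) : ‖r⁻¹ • x‖ ≤ 1 := by
  rcases ((norm_nonneg x).trans h).eq_or_lt with rfl | hr
  · simp
  · rw [norm_smul, norm_inv, Real.norm_of_nonneg hr.le]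
    exact inv_mul_le_one_of_le₀ h hr.le

/-- Alexander's isotopy: `f` shrunk into the ball of radius `s`, coned off radially outside it. -/
def alexanderMap (f : closedBall (0 : E) 1 → closedBall (0 : E) 1) (s : I)
    (x : closedBall (0 : E) 1) : closedBall (0 : E) 1 :=
  ⟨max (s : ℝ) ‖(x : E)‖ •
      (f ⟨(max (s : ℝ) ‖(x : E)‖)⁻¹ • (x : E),
        mem_closedBall_zero_iff.2 (norm_inv_smul_le_one (le_max_right _ _))⟩ : E),
    (convex_closedBall (0 : E) 1).smul_mem_of_zero_mem (mem_closedBall_self zero_le_one)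
      (f _).2 ⟨le_max_of_le_left s.2.1, max_le s.2.2 (mem_closedBall_zero_iff.1 x.2)⟩⟩

variable {f g : closedBall (0 : E) 1 → closedBall (0 : E) 1}

lemma coe_alexanderMap_of_eq {s : I} {x : closedBall (0 : E) 1} {r : ℝ}
    (hr : max (s : ℝ) ‖(x : E)‖ = r) :
    (alexanderMap f s x : E) = r • (f ⟨r⁻¹ • (x : E),
      mem_closedBall_zero_iff.2 (norm_inv_smul_le_one (hr ▸ le_max_right _ _))⟩ : E) := by
  subst hr; rfl

lemma norm_alexanderMap_le (s : I) (x : closedBall (0 : E) 1) :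
    ‖(alexanderMap f s x : E)‖ ≤ max (s : ℝ) ‖(x : E)‖ := by
  rw [alexanderMap, norm_smul, Real.norm_of_nonneg (le_max_of_le_left (s.2.1))]
  exact mul_le_of_le_one_right (le_max_of_le_left s.2.1) (mem_closedBall_zero_iff.1 (f _).2)

lemma alexanderMap_one : alexanderMap f 1 = f := by
  ext x
  rw [coe_alexanderMap_of_eq (r := 1) (max_eq_left (mem_closedBall_zero_iff.1 x.2))]
  simp only [inv_one, one_smul]

lemma continuous_alexanderMap (hf : Continuous f) : Continuous (uncurry (alexanderMap f)) := by
  refine Continuous.subtype_mk (continuous_iff_continuousAt.2 fun p₀ => ?_) _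
  set r : I × closedBall (0 : E) 1 → ℝ := fun p => max (p.1 : ℝ) ‖(p.2 : E)‖
  have hr : Continuous r := by fun_prop
  rcases (le_max_of_le_right (norm_nonneg _) : 0 ≤ r p₀).eq_or_lt with hr₀ | hr₀
  · -- at `(s, x) = (0, 0)` the map is squeezed to `0` by the radius `r`
    have hval : (alexanderMap f p₀.1 p₀.2 : E) = 0 := by
      rw [coe_alexanderMap_of_eq hr₀.symm, zero_smul]
    change ContinuousAt (fun p : I × closedBall (0 : E) 1 => (alexanderMap f p.1 p.2 : E)) p₀
    rw [ContinuousAt, hval]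
    refine squeeze_zero_norm (fun p : I × closedBall (0 : E) 1 => norm_alexanderMap_le p.1 p.2) ?_
    exact hr₀ ▸ hr.tendsto p₀
  · have hin : ContinuousAt (fun p : I × closedBall (0 : E) 1 => (⟨(r p)⁻¹ • (p.2 : E),
        mem_closedBall_zero_iff.2 (norm_inv_smul_le_one (le_max_right _ _))⟩ :
          closedBall (0 : E) 1)) p₀ :=
      ((hr.continuousAt.inv₀ hr₀.ne').smul
        (continuous_subtype_val.comp continuous_snd).continuousAt).codRestrict _
    exact hr.continuousAt.smul (continuous_subtype_val.continuousAt.comp (hf.continuousAt.comp hin))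

lemma max_norm_alexanderMap
    (hf : ∀ x : closedBall (0 : E) 1, ‖(x : E)‖ = 1 → ‖(f x : E)‖ = 1) (s : I)
    (x : closedBall (0 : E) 1) :
    max (s : ℝ) ‖(alexanderMap f s x : E)‖ = max (s : ℝ) ‖(x : E)‖ := by
  rcases le_or_gt ‖(x : E)‖ s with hxs | hsx
  · rw [max_eq_left hxs, max_eq_left ((norm_alexanderMap_le s x).trans_eq (max_eq_left hxs))]
  · have hx : (x : E) ≠ 0 := norm_pos_iff.1 (s.2.1.trans_lt hsx)
    rw [coe_alexanderMap_of_eq (max_eq_right hsx.le), norm_smul, hf _ (norm_smul_inv_norm hx),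
      mul_one, norm_norm]

lemma alexanderMap_leftInverse
    (hf : ∀ x : closedBall (0 : E) 1, ‖(x : E)‖ = 1 → ‖(f x : E)‖ = 1)
    (hgf : LeftInverse g f) (s : I) : LeftInverse (alexanderMap g s) (alexanderMap f s) := by
  intro x
  obtain ⟨r, hr⟩ : ∃ r, max (s : ℝ) ‖(x : E)‖ = r := ⟨_, rfl⟩
  ext1
  rw [coe_alexanderMap_of_eq ((max_norm_alexanderMap hf s x).trans hr)]
  rcases (hr ▸ le_max_of_le_right (norm_nonneg _) : 0 ≤ r).eq_or_lt with rfl | hr₀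
  · rw [zero_smul, eq_comm, ← norm_le_zero_iff, ← hr]
    exact le_max_right _ _
  · simp only [coe_alexanderMap_of_eq hr, inv_smul_smul₀ hr₀.ne', Subtype.coe_eta, hgf _,
      smul_inv_smul₀ hr₀.ne']

theorem isHomeomorph_alexanderMap (f : closedBall (0 : E) 1 ≃ₜ closedBall (0 : E) 1)
    (hf : ∀ x, ‖(f x : E)‖ = 1 ↔ ‖(x : E)‖ = 1) (s : I) :
    IsHomeomorph (alexanderMap f s) :=
  (Homeomorph.mk
    { toFun := alexanderMap f s
      invFun := alexanderMap f.symm s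
      left_inv := alexanderMap_leftInverse (fun x => (hf x).2) f.symm_apply_apply s
      right_inv := alexanderMap_leftInverse
        (fun y hy => by rwa [← hf, Homeomorph.apply_symm_apply]) f.apply_symm_apply s }
    ((continuous_alexanderMap f.continuous).comp (Continuous.prodMk_right s))
    ((continuous_alexanderMap f.symm.continuous).comp (Continuous.prodMk_right s))).isHomeomorph

/-- The cone `x ↦ ‖x‖ • f (‖x‖⁻¹ • x)` over the boundary values of `f`. -/
def sphereCone (f : closedBall (0 : E) 1 → closedBall (0 : E) 1) (hf : Continuous f) :
    C(closedBall (0 : E) 1, closedBall (0 : E) 1) :=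
  ⟨alexanderMap f 0, (continuous_alexanderMap hf).comp (Continuous.prodMk_right 0)⟩

theorem isotopic_sphereCone (f : closedBall (0 : E) 1 ≃ₜ closedBall (0 : E) 1)
    (hf : ∀ x, ‖(f x : E)‖ = 1 ↔ ‖(x : E)‖ = 1) :
    Isotopic (f : C(closedBall (0 : E) 1, closedBall (0 : E) 1)) (sphereCone f f.continuous) :=
  ⟨{ toFun := fun p => alexanderMap f (σ p.1) p.2
     continuous_toFun := (continuous_alexanderMap f.continuous).comp
       (continuous_symm.prodMap continuous_id)
     map_zero_left := fun x => by simp [alexanderMap_one]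
     map_one_left := fun x => congrArg (alexanderMap f · x) symm_one
     prop' := fun t => isHomeomorph_alexanderMap f hf (σ t) }⟩

end Alexander

namespace CircleDeg1Lift

def lineMap (f g : CircleDeg1Lift) (t : I) : CircleDeg1Lift where
  toFun x := (1 - t) * f x + t * g x
  monotone' _ _ h := add_le_add (mul_le_mul_of_nonneg_left (f.mono h) (sub_nonneg.2 t.2.2))
    (mul_le_mul_of_nonneg_left (g.mono h) t.2.1)
  map_add_one' x := by simp only [map_add_one]; ring

variable {f g : CircleDeg1Lift}

lemma lineMap_apply (t : I) (x : ℝ) : f.lineMap g t x = (1 - t) * f x + t * g x := rfl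

lemma lineMap_zero : f.lineMap g 0 = f := ext fun x => by simp [lineMap_apply]

lemma lineMap_one : f.lineMap g 1 = g := ext fun x => by simp [lineMap_apply]

lemma continuous_lineMap (hf : Continuous f) (hg : Continuous g) :
    Continuous fun p : I × ℝ => f.lineMap g p.1 p.2 := by
  simp only [lineMap_apply]
  fun_prop

lemma strictMono_lineMap (hf : StrictMono f) (hg : StrictMono g) (t : I) :
    StrictMono (f.lineMap g t) := fun a b hab => by
  simp only [lineMap_apply]
  have hfab := sub_pos.2 (hf hab)
  have hgab := sub_pos.2 (hg hab)
  rcases t.2.2.lt_or_eq with ht | ht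
  · nlinarith [mul_pos (sub_pos.2 ht) hfab, mul_nonneg t.2.1 hgab.le]
  · rw [ht]; linarith

end CircleDeg1Lift

section Polar

open Complex

lemma fourierChar_eq_fourierChar_iff {a b : ℝ} : 𝐞 a = 𝐞 b ↔ ∃ m : ℤ, a = b + m := by
  rw [Real.fourierChar_apply', Real.fourierChar_apply', Circle.exp_eq_exp]
  refine exists_congr fun m => ?_
  rw [show 2 * π * b + m * (2 * π) = 2 * π * (b + m) by ring, mul_right_inj' (by positivity)]

lemma norm_mul_fourierChar_arg (z : ℂ) : (‖z‖ : ℂ) * 𝐞 (arg z / (2 * π)) = z := by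
  rw [Real.fourierChar_apply, mul_div_cancel₀ _ (by positivity)]
  exact norm_mul_exp_arg_mul_I z

lemma norm_mul_fourierChar_arg_div_add_arg {w : ℂ} (hw : w ≠ 0) (z : ℂ) :
    (‖z‖ : ℂ) * 𝐞 ((arg (z / w) + arg w) / (2 * π)) = z := by
  have hw' : (‖w‖ : ℂ) ≠ 0 := by exact_mod_cast norm_ne_zero_iff.2 hw
  calc (‖z‖ : ℂ) * 𝐞 ((arg (z / w) + arg w) / (2 * π))
      = (‖z / w‖ * 𝐞 (arg (z / w) / (2 * π))) * (‖w‖ * 𝐞 (arg w / (2 * π))) := by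
        rw [add_div, AddChar.map_add_eq_mul, Circle.coe_mul, norm_div, ofReal_div]
        field_simp
    _ = z := by rw [norm_mul_fourierChar_arg, norm_mul_fourierChar_arg, div_mul_cancel₀ z hw]

lemma fourierChar_mem_closedBall (θ : ℝ) : (𝐞 θ : ℂ) ∈ closedBall (0 : ℂ) 1 :=
  mem_closedBall_zero_iff.2 (Circle.norm_coe _).le

lemma inv_norm_smul_eq_fourierChar_arg {z : ℂ} (hz : z ≠ 0) :
    (‖z‖⁻¹ • z : ℂ) = 𝐞 (arg z / (2 * π)) := by
  rw [inv_smul_eq_iff₀ (norm_ne_zero_iff.2 hz), real_smul, norm_mul_fourierChar_arg]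

/-- The cone over the circle map with lift `G`. -/
def radialExtension (G : CircleDeg1Lift) (z : ℂ) : ℂ := ‖z‖ * 𝐞 (G (arg z / (2 * π)))

variable {G : CircleDeg1Lift}

@[simp]
lemma norm_radialExtension (z : ℂ) : ‖radialExtension G z‖ = ‖z‖ := by
  simp [radialExtension, Circle.norm_coe]

lemma radialExtension_eq_of_norm_mul_fourierChar {z : ℂ} {θ : ℝ}
    (h : (‖z‖ : ℂ) * 𝐞 θ = z) :
    radialExtension G z = ‖z‖ * 𝐞 (G θ) := by
  rcases eq_or_ne z 0 with rfl | hz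
  · simp [radialExtension]
  have hz' : (‖z‖ : ℂ) ≠ 0 := by exact_mod_cast norm_ne_zero_iff.2 hz
  obtain ⟨m, hm⟩ := fourierChar_eq_fourierChar_iff.1 <| Circle.coe_injective <|
    mul_left_cancel₀ hz' ((norm_mul_fourierChar_arg z).trans h.symm)
  rw [radialExtension, hm, G.map_add_int, fourierChar_eq_fourierChar_iff.2 ⟨m, rfl⟩]

lemma radialExtension_one (z : ℂ) : radialExtension 1 z = z := by
  rw [radialExtension, CircleDeg1Lift.coe_one, id, norm_mul_fourierChar_arg]

theorem continuous_radialExtension {X : Type*} [TopologicalSpace X] {G : X → CircleDeg1Lift}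
    (hG : Continuous fun p : X × ℝ => G p.1 p.2) :
    Continuous fun p : X × ℂ => radialExtension (G p.1) p.2 := by
  refine continuous_iff_continuousAt.2 fun ⟨x₀, z₀⟩ => ?_
  rcases eq_or_ne z₀ 0 with rfl | hz₀
  · have h₀ : radialExtension (G x₀) 0 = 0 := by simp [radialExtension]
    rw [ContinuousAt, h₀, tendsto_zero_iff_norm_tendsto_zero]
    simpa only [norm_radialExtension, norm_zero] using
      (continuous_snd.norm : Continuous fun p : X × ℂ => ‖p.2‖).tendsto (x₀, 0)
  · -- near `z₀ ≠ 0`, `(arg (z / z₀) + arg z₀) / 2π` is a continuous angle of `z`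
    have hlift : (fun p : X × ℂ => radialExtension (G p.1) p.2) =
        fun p => (‖p.2‖ : ℂ) * 𝐞 (G p.1 ((arg (p.2 / z₀) + arg z₀) / (2 * π))) :=
      funext fun p => radialExtension_eq_of_norm_mul_fourierChar
        (norm_mul_fourierChar_arg_div_add_arg hz₀ p.2)
    have harg : ContinuousAt (fun z => arg (z / z₀)) z₀ :=
      (continuousAt_arg (by simp [hz₀])).comp (continuousAt_id.div_const z₀)
    have hθ : ContinuousAt (fun p : X × ℂ => G p.1 ((arg (p.2 / z₀) + arg z₀) / (2 * π)))
        (x₀, z₀) :=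
      hG.continuousAt.comp
        (f := fun p : X × ℂ => (p.1, (arg (p.2 / z₀) + arg z₀) / (2 * π)))
        (continuousAt_fst.prodMk
          (((harg.comp (x := (x₀, z₀)) continuousAt_snd).add continuousAt_const).div_const _))
    rw [hlift]
    exact (continuous_ofReal.comp continuous_snd.norm).continuousAt.mul
      ((continuous_subtype_val.comp Real.continuous_fourierChar).continuousAt.comp hθ)

lemma radialExtension_injective (hG : Injective G) : Injective (radialExtension G) := by
  intro z w h
  have hn : ‖z‖ = ‖w‖ := by rw [← norm_radialExtension (G := G), h, norm_radialExtension]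
  rcases eq_or_ne w 0 with rfl | hw
  · exact norm_eq_zero.1 (hn.trans norm_zero)
  have hw' : (‖w‖ : ℂ) ≠ 0 := by exact_mod_cast norm_ne_zero_iff.2 hw
  rw [radialExtension, radialExtension, hn] at h
  obtain ⟨m, hm⟩ :=
    fourierChar_eq_fourierChar_iff.1 (Circle.coe_injective (mul_left_cancel₀ hw' h))
  rw [← G.map_add_int] at hm
  rw [← norm_mul_fourierChar_arg z, ← norm_mul_fourierChar_arg w, hn, hG hm,
    fourierChar_eq_fourierChar_iff.2 ⟨m, rfl⟩]

lemma radialExtension_surjective (hG : Surjective G) : Surjective (radialExtension G) := by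
  intro w
  obtain ⟨θ, hθ⟩ := hG (arg w / (2 * π))
  have hz : ‖(‖w‖ * 𝐞 θ : ℂ)‖ = ‖w‖ := by simp [Circle.norm_coe]
  refine ⟨‖w‖ * 𝐞 θ, ?_⟩
  rw [radialExtension_eq_of_norm_mul_fourierChar (θ := θ) (by rw [hz]), hz, hθ,
    norm_mul_fourierChar_arg]

end Polar

def radialDiskMap (G : CircleDeg1Lift) (hG : Continuous G) :
    C(closedBall (0 : ℂ) 1, closedBall (0 : ℂ) 1) where
  toFun z := ⟨radialExtension G z,
    mem_closedBall_zero_iff.2 ((norm_radialExtension _).trans_le (mem_closedBall_zero_iff.1 z.2))⟩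
  continuous_toFun := ((((continuous_radialExtension (G := fun _ : Unit => G)
    (hG.comp continuous_snd)).comp (Continuous.prodMk_right ())).comp
      continuous_subtype_val).subtype_mk _)

lemma radialDiskMap_one : radialDiskMap 1 continuous_id = ContinuousMap.id _ :=
  ContinuousMap.ext fun z => Subtype.ext (radialExtension_one z)

lemma isHomeomorph_radialDiskMap {G : CircleDeg1Lift} (hc : Continuous G) (hm : StrictMono G) :
    IsHomeomorph (radialDiskMap G hc) := by
  refine isHomeomorph_iff_continuous_bijective.2 ⟨(radialDiskMap G hc).continuous, ?_⟩
  have hbij : Bijective (radialExtension G) :=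
    ⟨radialExtension_injective hm.injective,
      radialExtension_surjective (G.continuous_iff_surjective.1 hc)⟩
  exact (bijOn_closedBall_of_norm_eq hbij norm_radialExtension 1).bijective

theorem isotopic_radialDiskMap {f g : CircleDeg1Lift} (hfc : Continuous f) (hgc : Continuous g)
    (hfm : StrictMono f) (hgm : StrictMono g) :
    Isotopic (radialDiskMap f hfc) (radialDiskMap g hgc) := by
  have hc : Continuous fun p : I × ℝ => f.lineMap g p.1 p.2 :=
    CircleDeg1Lift.continuous_lineMap hfc hgc
  refine ⟨{
    toFun := fun p => radialDiskMap (f.lineMap g p.1) (hc.comp (Continuous.prodMk_right p.1)) p.2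
    continuous_toFun := ?_
    map_zero_left := fun x => ?_
    map_one_left := fun x => ?_
    prop' := fun t => ?_ }⟩
  · exact ((continuous_radialExtension hc).comp
      (continuous_id.prodMap continuous_subtype_val)).subtype_mk _
  · exact Subtype.ext (congrArg (radialExtension · x) CircleDeg1Lift.lineMap_zero)
  · exact Subtype.ext (congrArg (radialExtension · x) CircleDeg1Lift.lineMap_one)
  · exact (isHomeomorph_radialDiskMap (hc.comp (Continuous.prodMk_right t))
      (CircleDeg1Lift.strictMono_lineMap hfm hgm t) :)

open Complex in
lemma sphereCone_eq_radialDiskMap {f : closedBall (0 : ℂ) 1 → closedBall (0 : ℂ) 1}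
    (hf : Continuous f) {G : CircleDeg1Lift} (hG : Continuous G)
    (hfG : ∀ θ, (f ⟨𝐞 θ, fourierChar_mem_closedBall θ⟩ : ℂ) = 𝐞 (G θ)) :
    sphereCone f hf = radialDiskMap G hG := by
  ext z
  change (alexanderMap f 0 z : ℂ) = radialExtension G z
  rw [coe_alexanderMap_of_eq (r := ‖(z : ℂ)‖) (max_eq_right (norm_nonneg _))]
  rcases eq_or_ne (z : ℂ) 0 with hz | hz
  · simp [radialExtension, hz]
  · have hpolar : (⟨‖(z : ℂ)‖⁻¹ • (z : ℂ), mem_closedBall_zero_iff.2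
        (norm_inv_smul_le_one le_rfl)⟩ : closedBall (0 : ℂ) 1) =
        ⟨𝐞 (arg z / (2 * π)), fourierChar_mem_closedBall _⟩ :=
      Subtype.ext (inv_norm_smul_eq_fourierChar_arg hz)
    rw [hpolar, hfG, radialExtension, real_smul]

end

/-- Every orientation-preserving homeomorphism of the closed unit disk (one mapping the
boundary circle onto itself, whose boundary restriction lifts to a continuous strictly
increasing map `H : ℝ → ℝ` with `H (x+1) = H x + 1`) is isotopic to the identity. -/
theorem orientation_preserving_homeomorph_disk_isotopic_to_id
    (h : Homeomorph (Metric.closedBall (0 : ℂ) 1) (Metric.closedBall (0 : ℂ) 1))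
    (hbd : (fun x => h x) '' {x : Metric.closedBall (0 : ℂ) 1 | ‖x.val‖ = 1}
      = {x : Metric.closedBall (0 : ℂ) 1 | ‖x.val‖ = 1})
    (H : ℝ → ℝ) (Hcont : Continuous H) (Hmono : StrictMono H)
    (Hper : ∀ x : ℝ, H (x + 1) = H x + 1)
    (Hlift : ∀ x : ℝ,
      h ⟨Complex.exp ((2 * π * x : ℝ) * Complex.I), by
          rw [Metric.mem_closedBall, dist_zero_right, Complex.norm_exp_ofReal_mul_I]⟩
        = ⟨Complex.exp ((2 * π * H x : ℝ) * Complex.I), by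
          rw [Metric.mem_closedBall, dist_zero_right, Complex.norm_exp_ofReal_mul_I]⟩) :
    ∃ F : I × Metric.closedBall (0 : ℂ) 1 → Metric.closedBall (0 : ℂ) 1,
      Continuous F ∧
      (∀ x, F (0, x) = h x) ∧
      (∀ x, F (1, x) = x) ∧
      (∀ t : I, IsHomeomorph fun x => F (t, x)) := by
  let G : CircleDeg1Lift := ⟨⟨H, Hmono.monotone⟩, Hper⟩
  have hsphere : ∀ x, ‖(h x : ℂ)‖ = 1 ↔ ‖(x : ℂ)‖ = 1 := fun x =>
    (Set.ext_iff.1 hbd (h x)).symm.trans h.injective.mem_set_image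
  -- `𝐞 θ` is by definition `exp (2πθ i)`, so `Hlift` is the hypothesis of the lemma
  have hcone : sphereCone h h.continuous = radialDiskMap G Hcont :=
    sphereCone_eq_radialDiskMap _ _ fun θ => congrArg Subtype.val (Hlift θ)
  obtain ⟨F⟩ :
      Isotopic (h : C(closedBall (0 : ℂ) 1, closedBall (0 : ℂ) 1)) (ContinuousMap.id _) := by
    refine (isotopic_sphereCone h hsphere).trans ?_
    rw [hcone, ← radialDiskMap_one]
    exact isotopic_radialDiskMap Hcont continuous_id Hmono strictMono_id
  exact ⟨F, F.continuous, F.apply_zero, F.apply_one, F.prop⟩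
end

section
/- Let S = [0,1] × ℝ be the doubly infinite closed strip and let h : S → S be a homeomorphism for which there exists a homotopy H : [0,1] × S → S from h to the identity (H(0,·) = h, H(1,·) = id) such that H is a proper map and H(t, ·) maps the boundary ({0,1} × ℝ) into itself for every t ∈ [0,1]. Then h is isotopic to the identity: there exists a continuous map F : [0,1] × S → S such that F(0,·) = h, F(1,·) = id, and F(t,·) : S → S is a homeomorphism for every t ∈ [0,1]. -/
/-!
Since `H` is rel boundary and `I` is connected, every track `t ↦ H (t, p)` of a boundary point
stays on its boundary line, so `h` maps each line `{e} × ℝ` to itself by some `φₑ`. Properness of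
`H` bounds the points whose track crosses a given level, so far up (down) a line `φₑ` is large
(small): `φ₀, φ₁` are increasing homeomorphisms of `ℝ`. Interpolating linearly between the
identity and `φ₀, φ₁` gives an isotopy from the identity to a homeomorphism `L` that agrees with
`h` on the boundary, and it remains to isotope `g = L⁻¹ ∘ h`, which fixes the boundary pointwise.

The strip is the closed unit disk minus the poles `±i`, its boundary lines being the two open half
circles. The proper map `g` fixes `{0} × ℝ`, hence preserves the two ends of the strip, so `g`
extended by the identity is a homeomorphism `ĝ` of `ℂ` which is the identity off the open unit
disk. The Alexander trick `z ↦ t ĝ (z / t)` (the identity where `‖z‖ > t`) isotopes `ĝ` to the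
identity through homeomorphisms preserving the disk minus the poles.
-/

open unitInterval Set Filter Topology Function Metric

def IsIsotopy {X : Type*} [TopologicalSpace X] (F : I × X → X) : Prop :=
  Continuous F ∧ ∀ t, IsHomeomorph fun x => F (t, x)

namespace IsIsotopy

variable {X : Type*} [TopologicalSpace X] {F G : I × X → X}

lemma comp (hF : IsIsotopy F) (hG : IsIsotopy G) : IsIsotopy fun q : I × X => F (q.1, G q) :=
  ⟨hF.1.comp (continuous_fst.prodMk hG.1), fun t => (hF.2 t).comp (hG.2 t)⟩

lemma symm (hF : IsIsotopy F) : IsIsotopy fun q : I × X => F (σ q.1, q.2) :=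
  ⟨hF.1.comp ((continuous_symm.comp continuous_fst).prodMk continuous_snd), fun t => hF.2 (σ t)⟩

lemma conj {Y : Type*} [TopologicalSpace Y] {S : Set Y} (Φ : X ≃ₜ S) {A : I × Y → Y}
    (hA : IsIsotopy A) (hS : ∀ t y, A (t, y) ∈ S ↔ y ∈ S) :
    IsIsotopy fun q : I × X => Φ.symm ⟨A (q.1, Φ q.2), (hS _ _).2 (Φ q.2).2⟩ := by
  refine ⟨Φ.symm.continuous.comp (Continuous.subtype_mk (hA.1.comp (continuous_fst.prodMk
    (continuous_subtype_val.comp (Φ.continuous.comp continuous_snd)))) _), fun t => ?_⟩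
  exact (Φ.trans ((((hA.2 t).homeomorph _).subtype fun y => (hS t y).symm).trans
    Φ.symm)).isHomeomorph

end IsIsotopy

section Ends

variable {X α : Type*} [TopologicalSpace X] [PreconnectedSpace X]
  [LinearOrder α] [TopologicalSpace α] [OrderClosedTopology α]

lemma tendsto_comap_snd_atTop_of_isProperMap [NoMaxOrder α] {K : X × α → α}
    (hK : IsProperMap K) {x₀ : X} (hx₀ : ∀ y, K (x₀, y) = y) :
    Tendsto K (comap Prod.snd atTop) atTop := by
  refine tendsto_atTop.2 fun c => ?_
  have : Nonempty α := ⟨c⟩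
  obtain ⟨B, hB⟩ := (hK.isCompact_preimage isCompact_singleton).bddAbove_image
    continuous_snd.continuousOn
  filter_upwards [preimage_mem_comap (eventually_gt_atTop (max B c))] with ⟨x, y⟩ hy
  by_contra! hlt
  have hcy : c ≤ K (x₀, y) := (hx₀ y).symm ▸ (le_max_right B c).trans hy.le
  obtain ⟨x', hx'⟩ := intermediate_value_univ x x₀ (hK.continuous.comp (.prodMk_left y))
    ⟨hlt.le, hcy⟩
  have hyB : y ≤ B := hB ⟨(x', y), hx', rfl⟩
  exact hyB.not_gt ((le_max_left B c).trans_lt hy)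

lemma tendsto_comap_snd_atBot_of_isProperMap [NoMinOrder α] {K : X × α → α}
    (hK : IsProperMap K) {x₀ : X} (hx₀ : ∀ y, K (x₀, y) = y) :
    Tendsto K (comap Prod.snd atBot) atBot :=
  tendsto_comap_snd_atTop_of_isProperMap (α := αᵒᵈ) hK hx₀

end Ends

section OrderIsoReal

lemma exists_orderIso_of_continuous_injective {f : ℝ → ℝ} (hc : Continuous f)
    (hi : Injective f) (htop : Tendsto f atTop atTop) (hbot : Tendsto f atBot atBot) :
    ∃ φ : ℝ ≃o ℝ, ⇑φ = f := by
  have hmono : StrictMono f := by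
    refine (hc.strictMono_of_inj hi).resolve_right fun hanti => ?_
    obtain ⟨y, hy, hfy⟩ := ((eventually_gt_atTop 0).and
      (htop.eventually (eventually_gt_atTop (f 0)))).exists
    exact (hanti hy).not_gt hfy
  exact ⟨hmono.orderIsoOfSurjective f (hc.surjective htop hbot), rfl⟩

noncomputable def OrderIso.convexComb (f g : ℝ ≃o ℝ) (a : I) : ℝ ≃o ℝ :=
  StrictMono.orderIsoOfSurjective (fun y => (1 - a) * f y + a * g y)
    (fun y z hyz => by
      have hf := f.strictMono hyz
      have hg := g.strictMono hyz
      dsimp only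
      rcases a.2.2.lt_or_eq with ha | ha
      · nlinarith [mul_pos (sub_pos.2 ha) (sub_pos.2 hf), mul_nonneg a.2.1 (sub_pos.2 hg).le]
      · rw [ha]; linarith)
    (fun c => by
      set y₁ := min (f.symm c) (g.symm c)
      set y₂ := max (f.symm c) (g.symm c)
      have hf₁ : f y₁ ≤ c := f.le_symm_apply.1 (min_le_left _ _)
      have hg₁ : g y₁ ≤ c := g.le_symm_apply.1 (min_le_right _ _)
      have hf₂ : c ≤ f y₂ := f.symm_apply_le.1 (le_max_left _ _)
      have hg₂ : c ≤ g y₂ := g.symm_apply_le.1 (le_max_right _ _)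
      obtain ⟨y, -, hy⟩ := intermediate_value_Icc min_le_max
        (by fun_prop : Continuous fun y => (1 - (a : ℝ)) * f y + a * g y).continuousOn
        (show c ∈ Icc _ _ from ⟨by nlinarith [a.2.1, a.2.2], by nlinarith [a.2.1, a.2.2]⟩)
      exact ⟨y, hy⟩)

@[simp]
lemma OrderIso.convexComb_apply (f g : ℝ ≃o ℝ) (a : I) (y : ℝ) :
    f.convexComb g a y = (1 - a) * f y + a * g y := rfl

lemma isHomeomorph_prodMk_orderIso {X : Type*} [TopologicalSpace X] (Φ : X → ℝ ≃o ℝ)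
    (hΦ : Continuous fun q : X × ℝ => Φ q.1 q.2) :
    IsHomeomorph fun q : X × ℝ => (q.1, Φ q.1 q.2) := by
  refine isHomeomorph_iff_exists_inverse.2 ⟨continuous_fst.prodMk hΦ,
    fun q => (q.1, (Φ q.1).symm q.2), fun q => by simp, fun q => by simp, ?_⟩
  refine continuous_fst.prodMk (continuous_iff_continuousAt.2 fun q => ?_)
  have hslice (y : ℝ) : Continuous fun q : X × ℝ => Φ q.1 y :=
    hΦ.comp (continuous_fst.prodMk continuous_const)
  refine tendsto_order.2 ⟨fun a ha => ?_, fun b hb => ?_⟩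
  · have : Φ q.1 a < q.2 := (Φ q.1).lt_symm_apply.1 ha
    filter_upwards [(hslice a).continuousAt.eventually_lt continuousAt_snd this] with r hr
    exact (Φ r.1).lt_symm_apply.2 hr
  · have : q.2 < Φ q.1 b := (Φ q.1).symm_apply_lt.1 hb
    filter_upwards [continuousAt_snd.eventually_lt (hslice b).continuousAt this] with r hr
    exact (Φ r.1).symm_apply_lt.2 hr

end OrderIsoReal

section BoundaryLines

variable {H : I × (I × ℝ) → I × ℝ}

lemma homotopy_fst_eq_of_mem_boundary (Hcont : Continuous H) (H1 : ∀ p, H (1, p) = p)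
    (Hbd : ∀ (t : I) (p : I × ℝ), ((p.1 : ℝ) = 0 ∨ (p.1 : ℝ) = 1) →
      (((H (t, p)).1 : ℝ) = 0 ∨ ((H (t, p)).1 : ℝ) = 1))
    {p : I × ℝ} (hp : (p.1 : ℝ) = 0 ∨ (p.1 : ℝ) = 1) (t : I) : (H (t, p)).1 = p.1 := by
  have := isPreconnected_univ.constant_of_mapsTo (toFinite ({0, 1} : Set ℝ)).isDiscrete
    (by fun_prop : Continuous fun t : I => ((H (t, p)).1 : ℝ)).continuousOn
    (fun t _ => Hbd t p hp) (mem_univ t) (mem_univ 1)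
  rw [H1] at this
  exact Subtype.ext this

lemma exists_orderIso_apply_boundary (h : (I × ℝ) ≃ₜ (I × ℝ))
    (H0 : ∀ p, H (0, p) = h p) (H1 : ∀ p, H (1, p) = p) (Hproper : IsProperMap H)
    (Hbd : ∀ (t : I) (p : I × ℝ), ((p.1 : ℝ) = 0 ∨ (p.1 : ℝ) = 1) →
      (((H (t, p)).1 : ℝ) = 0 ∨ ((H (t, p)).1 : ℝ) = 1))
    {e : I} (he : (e : ℝ) = 0 ∨ (e : ℝ) = 1) : ∃ φ : ℝ ≃o ℝ, ∀ y, h (e, y) = (e, φ y) := by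
  have hfst (y : ℝ) : (h (e, y)).1 = e := by
    rw [← H0]
    exact homotopy_fst_eq_of_mem_boundary Hproper.continuous H1 Hbd he 0
  set K : I × ℝ → ℝ := fun q => (H (q.1, (e, q.2))).2
  have hK : IsProperMap K := isProperMap_snd_of_compactSpace.comp <| Hproper.comp <|
    (IsClosedEmbedding.id.prodMap ⟨isEmbedding_prodMkRight e,
      (isClosedMap_prodMk_left e).isClosed_range⟩).isProperMap
  have hK0 (y : ℝ) : K (0, y) = (h (e, y)).2 := by simp [K, H0]
  have hK1 (y : ℝ) : K (1, y) = y := by simp [K, H1]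
  obtain ⟨φ, hφ⟩ := exists_orderIso_of_continuous_injective (f := fun y => K (0, y))
    (hK.continuous.comp (.prodMk_right 0))
    (fun y₁ y₂ hy => by
      simp only [hK0] at hy
      simpa using h.injective (Prod.ext (by rw [hfst, hfst]) hy))
    ((tendsto_comap_snd_atTop_of_isProperMap hK hK1).comp (tendsto_comap_iff.2 tendsto_id))
    ((tendsto_comap_snd_atBot_of_isProperMap hK hK1).comp (tendsto_comap_iff.2 tendsto_id))
  exact ⟨φ, fun y => Prod.ext (hfst y) (by simp [hφ, hK0])⟩

end BoundaryLines

section Straightening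

variable (φ₀ φ₁ : ℝ ≃o ℝ)

noncomputable def straighteningFiber (s x : I) : ℝ ≃o ℝ :=
  ((OrderIso.refl ℝ).convexComb φ₀ s).convexComb ((OrderIso.refl ℝ).convexComb φ₁ s) x

noncomputable def straightening (q : I × (I × ℝ)) : I × ℝ :=
  (q.2.1, straighteningFiber φ₀ φ₁ q.1 q.2.1 q.2.2)

lemma isIsotopy_straightening : IsIsotopy (straightening φ₀ φ₁) := by
  have := φ₀.continuous
  have := φ₁.continuous
  refine ⟨continuous_snd.fst.prodMk ?_,
    fun s => isHomeomorph_prodMk_orderIso (straighteningFiber φ₀ φ₁ s) ?_⟩ <;>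
  · simp only [straighteningFiber, OrderIso.convexComb_apply, OrderIso.refl_apply]
    fun_prop

lemma straightening_zero (p : I × ℝ) : straightening φ₀ φ₁ (0, p) = p := by
  simp only [straightening, straighteningFiber, Icc.coe_zero, OrderIso.convexComb_apply,
    OrderIso.refl_apply]
  exact Prod.ext rfl (by ring)

lemma straightening_one_zero (y : ℝ) : straightening φ₀ φ₁ (1, (0, y)) = (0, φ₀ y) := by
  simp [straightening, straighteningFiber]

lemma straightening_one_one (y : ℝ) : straightening φ₀ φ₁ (1, (1, y)) = (1, φ₁ y) := by
  simp [straightening, straighteningFiber]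

end Straightening

section Alexander

lemma norm_apply_le_one_of_injective {E : Type*} [Norm E] {f : E → E} (hf : Injective f)
    (hfix : ∀ z, 1 ≤ ‖z‖ → f z = z) {z : E} (hz : ‖z‖ ≤ 1) : ‖f z‖ ≤ 1 := by
  by_contra! h
  have : f z = z := hf (hfix _ h.le)
  rw [this] at h
  exact h.not_ge hz

variable {E : Type*} [NormedAddCommGroup E] [NormedSpace ℝ E] {f : E → E}

noncomputable def alexanderIsotopy (f : E → E) (q : I × E) : E :=
  if ‖q.2‖ ≤ q.1 then (q.1 : ℝ) • f ((q.1 : ℝ)⁻¹ • q.2) else q.2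

lemma norm_smul_apply_inv_smul_le (hf : ∀ z, ‖z‖ ≤ 1 → ‖f z‖ ≤ 1) {t : ℝ} (ht : 0 ≤ t)
    {z : E} (hz : ‖z‖ ≤ t) : ‖t • f (t⁻¹ • z)‖ ≤ t := by
  rcases ht.eq_or_lt with rfl | ht
  · simp
  have : ‖t⁻¹ • z‖ ≤ 1 := by
    rw [norm_smul, norm_inv, Real.norm_of_nonneg ht.le]
    exact inv_mul_le_one_of_le₀ hz ht.le
  rw [norm_smul, Real.norm_of_nonneg ht.le]
  exact mul_le_of_le_one_right ht.le (hf _ this)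

lemma alexanderIsotopy_zero (z : E) : alexanderIsotopy f (0, z) = z := by
  unfold alexanderIsotopy
  split_ifs with h
  · simp only [Icc.coe_zero, norm_le_zero_iff] at h
    simp [h]
  · rfl

lemma alexanderIsotopy_one (hfix : ∀ z, 1 ≤ ‖z‖ → f z = z) (z : E) :
    alexanderIsotopy f (1, z) = f z := by
  unfold alexanderIsotopy
  split_ifs with h
  · simp
  · exact (hfix z (not_le.1 h).le).symm

lemma alexanderIsotopy_of_one_le_norm (hfix : ∀ z, 1 ≤ ‖z‖ → f z = z) (t : I) {z : E}
    (hz : 1 ≤ ‖z‖) : alexanderIsotopy f (t, z) = z := by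
  unfold alexanderIsotopy
  split_ifs with h
  · have ht : (t : ℝ) = 1 := le_antisymm t.2.2 (hz.trans h)
    simp [ht, hfix z hz]
  · rfl

lemma norm_alexanderIsotopy_le_one (hf : ∀ z, ‖z‖ ≤ 1 → ‖f z‖ ≤ 1) (t : I) {z : E}
    (hz : ‖z‖ ≤ 1) : ‖alexanderIsotopy f (t, z)‖ ≤ 1 := by
  unfold alexanderIsotopy
  split_ifs with h
  · exact (norm_smul_apply_inv_smul_le hf t.2.1 h).trans t.2.2
  · exact hz

lemma continuous_alexanderIsotopy (hc : Continuous f) (hfix : ∀ z, 1 ≤ ‖z‖ → f z = z)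
    (hf : ∀ z, ‖z‖ ≤ 1 → ‖f z‖ ≤ 1) : Continuous (alexanderIsotopy f) := by
  refine continuous_if_le (by fun_prop) (by fun_prop) (fun q hq => ?_)
    continuous_snd.continuousOn fun q hq => ?_
  · by_cases ht : (q.1 : ℝ) = 0
    · have hlim : Tendsto (fun r : I × E => (r.1 : ℝ))
          (𝓝[{r : I × E | ‖r.2‖ ≤ (r.1 : ℝ)}] q) (𝓝 0) :=
        ht ▸ (continuous_subtype_val.comp continuous_fst).continuousWithinAt
      rw [ContinuousWithinAt, ht, zero_smul]
      exact squeeze_zero_norm' (eventually_nhdsWithin_of_forall fun r hr =>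
        norm_smul_apply_inv_smul_le hf r.1.2.1 hr) hlim
    · have : ContinuousAt (fun r : I × E => ((r.1 : ℝ))⁻¹ • r.2) q :=
        ((continuous_subtype_val.comp continuous_fst).continuousAt.inv₀ ht).smul
          continuousAt_snd
      exact ((continuous_subtype_val.comp continuous_fst).continuousAt.smul
        (hc.continuousAt.comp this)).continuousWithinAt
  · by_cases ht : (q.1 : ℝ) = 0
    · have : q.2 = 0 := norm_eq_zero.1 (hq.trans ht)
      simp [ht, this]
    · have h1 : ‖((q.1 : ℝ))⁻¹ • q.2‖ = 1 := by
        rw [norm_smul, hq, norm_inv, Real.norm_of_nonneg q.1.2.1, inv_mul_cancel₀ ht]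
      rw [hfix _ h1.ge, smul_inv_smul₀ ht]

lemma alexanderIsotopy_leftInverse {g : E → E} (hgf : LeftInverse g f)
    (hf : ∀ z, ‖z‖ ≤ 1 → ‖f z‖ ≤ 1) (t : I) :
    LeftInverse (fun z => alexanderIsotopy g (t, z)) (fun z => alexanderIsotopy f (t, z)) := by
  intro z
  by_cases ht : t = 0
  · simp [ht, alexanderIsotopy_zero]
  have ht' : (t : ℝ) ≠ 0 := fun h => ht (Icc.coe_eq_zero.1 h)
  by_cases hz : ‖z‖ ≤ t
  · have hfz := norm_smul_apply_inv_smul_le hf t.2.1 hz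
    simp only [alexanderIsotopy, if_pos hz, if_pos hfz, inv_smul_smul₀ ht', hgf _,
      smul_inv_smul₀ ht']
  · simp only [alexanderIsotopy, if_neg hz]

lemma isIsotopy_alexanderIsotopy (f : E ≃ₜ E) (hfix : ∀ z, 1 ≤ ‖z‖ → f z = z) :
    IsIsotopy (alexanderIsotopy f) := by
  have hfix' (z : E) (hz : 1 ≤ ‖z‖) : f.symm z = z := f.symm_apply_eq.2 (hfix z hz).symm
  have hball {e : E ≃ₜ E} (he : ∀ z, 1 ≤ ‖z‖ → e z = z) (z : E) (hz : ‖z‖ ≤ 1) :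
      ‖e z‖ ≤ 1 :=
    norm_apply_le_one_of_injective e.injective he hz
  have hcont {e : E ≃ₜ E} (he : ∀ z, 1 ≤ ‖z‖ → e z = z) :=
    continuous_alexanderIsotopy e.continuous he (hball he)
  refine ⟨hcont hfix, fun t => isHomeomorph_iff_exists_inverse.2 ⟨(hcont hfix).comp
    (.prodMk_right t), fun z => alexanderIsotopy f.symm (t, z),
    alexanderIsotopy_leftInverse f.symm_apply_apply (hball hfix) t,
    alexanderIsotopy_leftInverse f.apply_symm_apply (hball hfix') t,
    (hcont hfix').comp (.prodMk_right t)⟩⟩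

lemma alexanderIsotopy_mem_closedBall_diff_iff (f : E ≃ₜ E) (hfix : ∀ z, 1 ≤ ‖z‖ → f z = z)
    {P : Set E} (hP : ∀ z ∈ P, 1 ≤ ‖z‖) (t : I) (z : E) :
    alexanderIsotopy f (t, z) ∈ closedBall 0 1 \ P ↔ z ∈ closedBall 0 1 \ P := by
  have one_le_norm_of_notMem {w : E} (hw : w ∉ closedBall 0 1 \ P) : 1 ≤ ‖w‖ := by
    by_cases hwP : w ∈ P
    · exact hP w hwP
    · simp only [Set.mem_sdiff, mem_closedBall_zero_iff, hwP, not_false_eq_true, and_true,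
        not_le] at hw
      exact hw.le
  refine ⟨fun h => ?_, fun ⟨hz, hzP⟩ => ⟨?_, fun hP' => hzP ?_⟩⟩
  · by_contra hz
    rw [alexanderIsotopy_of_one_le_norm hfix t (one_le_norm_of_notMem hz)] at h
    exact hz h
  · exact mem_closedBall_zero_iff.2 (norm_alexanderIsotopy_le_one
      (fun w => norm_apply_le_one_of_injective f.injective hfix) t (mem_closedBall_zero_iff.1 hz))
  · have := alexanderIsotopy_of_one_le_norm hfix t (hP _ hP')
    rw [← (isIsotopy_alexanderIsotopy f hfix).2 t |>.injective this]
    exact hP'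

end Alexander

namespace Real

lemma abs_sin_arctan_lt_one (y : ℝ) : |sin (arctan y)| < 1 := by
  have := cos_arctan_pos y
  rw [← sq_lt_one_iff_abs_lt_one, ← sin_sq_add_cos_sq (arctan y)]
  nlinarith

lemma cos_arcsin_pos {v : ℝ} (hv : |v| < 1) : 0 < cos (arcsin v) := by
  obtain ⟨h₁, h₂⟩ := abs_lt.1 hv
  exact cos_pos_of_mem_Ioo ⟨neg_pi_div_two_lt_arcsin.2 h₁, arcsin_lt_pi_div_two.2 h₂⟩

end Real

namespace Complex

lemma sq_norm_eq_re_sq_add_im_sq (w : ℂ) : ‖w‖ ^ 2 = w.re ^ 2 + w.im ^ 2 := by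
  rw [Complex.sq_norm, normSq_apply]
  ring

lemma inner_I (w : ℂ) : inner ℝ w Complex.I = w.im := by simp [Complex.inner]

lemma inner_neg_I (w : ℂ) : inner ℝ w (-Complex.I) = -w.im := by simp [Complex.inner]

end Complex

lemma tendsto_nhds_of_norm_le_one_of_tendsto_inner {F α : Type*} [NormedAddCommGroup F]
    [InnerProductSpace ℝ F] {l : Filter α} {f : α → F} {u : F} (hu : ‖u‖ = 1)
    (hf : ∀ᶠ a in l, ‖f a‖ ≤ 1) (h : Tendsto (fun a => inner ℝ (f a) u) l (𝓝 1)) :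
    Tendsto f l (𝓝 u) := by
  have hlim : Tendsto (fun a => √(2 - 2 * inner ℝ (f a) u)) l (𝓝 0) := by
    simpa using ((tendsto_const_nhds (x := (2 : ℝ))).sub (h.const_mul 2)).sqrt
  refine tendsto_iff_norm_sub_tendsto_zero.2 (squeeze_zero' (.of_forall fun _ => norm_nonneg _)
    (hf.mono fun a ha => ?_) hlim)
  rw [← abs_norm]
  refine Real.abs_le_sqrt ?_
  rw [norm_sub_sq_real, hu]
  nlinarith [pow_le_one₀ (norm_nonneg (f a)) ha (n := 2)]

section DiskModel

open Real

def diskMinusPoles : Set ℂ := closedBall 0 1 \ {Complex.I, -Complex.I}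

lemma abs_im_lt_one_of_mem_diskMinusPoles {w : ℂ} (hw : w ∈ diskMinusPoles) : |w.im| < 1 := by
  obtain ⟨hw₁, hwI⟩ := hw
  have hsq : w.re ^ 2 + w.im ^ 2 ≤ 1 := by
    rw [← Complex.sq_norm_eq_re_sq_add_im_sq]
    exact pow_le_one₀ (norm_nonneg w) (mem_closedBall_zero_iff.1 hw₁)
  refine lt_of_le_of_ne (abs_le.2 ⟨by nlinarith, by nlinarith⟩) fun him => hwI ?_
  have hre : w.re = 0 := by nlinarith [sq_abs w.im]
  rcases abs_eq (zero_le_one' ℝ) |>.1 him with h | h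
  · left; exact Complex.ext (by simp [hre]) (by simp [h])
  · right; exact Complex.ext (by simp [hre]) (by simp [h])

lemma ball_subset_diskMinusPoles : ball (0 : ℂ) 1 ⊆ diskMinusPoles := by
  intro w hw
  refine ⟨ball_subset_closedBall hw, ?_⟩
  rintro (rfl | rfl) <;> simp at hw

/-- Sends the boundary lines to the two open half circles of the unit circle and the ends
`y → ±∞` to `±i`. -/
noncomputable def stripToDisk (p : I × ℝ) : ℂ :=
  ⟨(2 * p.1 - 1) * cos (arctan p.2), sin (arctan p.2)⟩

noncomputable def diskToStrip (w : ℂ) : I × ℝ :=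
  (projIcc 0 1 zero_le_one ((w.re / cos (arcsin w.im) + 1) / 2), tan (arcsin w.im))

lemma continuous_stripToDisk : Continuous stripToDisk :=
  Complex.equivRealProdCLM.symm.continuous.comp
    (f := fun p : I × ℝ => ((2 * p.1 - 1) * cos (arctan p.2), sin (arctan p.2))) (by fun_prop)

lemma sq_norm_stripToDisk (p : I × ℝ) :
    ‖stripToDisk p‖ ^ 2 = (2 * p.1 - 1) ^ 2 * cos (arctan p.2) ^ 2 + sin (arctan p.2) ^ 2 := by
  rw [Complex.sq_norm_eq_re_sq_add_im_sq]
  simp only [stripToDisk]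
  ring

lemma stripToDisk_mem_diskMinusPoles (p : I × ℝ) : stripToDisk p ∈ diskMinusPoles := by
  have hx : (2 * (p.1 : ℝ) - 1) ^ 2 ≤ 1 := by nlinarith [p.1.2.1, p.1.2.2]
  have hsq := sin_sq_add_cos_sq (arctan p.2)
  refine ⟨mem_closedBall_zero_iff.2 ?_, fun hI => ?_⟩
  · refine (sq_le_one_iff₀ (norm_nonneg _)).1 ?_
    rw [sq_norm_stripToDisk]
    nlinarith [sq_nonneg (cos (arctan p.2))]
  · have := abs_sin_arctan_lt_one p.2
    rcases hI with h | h <;> have him := congrArg Complex.im h <;>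
      simp only [stripToDisk, Complex.I_im, Complex.neg_im] at him <;> simp [him] at this

lemma norm_stripToDisk_le_one (p : I × ℝ) : ‖stripToDisk p‖ ≤ 1 :=
  mem_closedBall_zero_iff.1 (stripToDisk_mem_diskMinusPoles p).1

lemma fst_eq_zero_or_one_of_norm_stripToDisk_eq_one {p : I × ℝ} (hp : ‖stripToDisk p‖ = 1) :
    p.1 = 0 ∨ p.1 = 1 := by
  have h := sq_norm_stripToDisk p
  rw [hp, one_pow] at h
  have hx : ((2 * (p.1 : ℝ) - 1) ^ 2 - 1) * cos (arctan p.2) ^ 2 = 0 := by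
    linarith [sin_sq_add_cos_sq (arctan p.2)]
  have hx' := (mul_eq_zero.1 hx).resolve_right (pow_pos (cos_arctan_pos p.2) 2).ne'
  rcases mul_eq_zero.1 (by linarith : (p.1 : ℝ) * (p.1 - 1) = 0) with h | h
  · exact Or.inl (Icc.coe_eq_zero.1 h)
  · exact Or.inr (Icc.coe_eq_one.1 (sub_eq_zero.1 h))

lemma diskToStrip_stripToDisk (p : I × ℝ) : diskToStrip (stripToDisk p) = p := by
  obtain ⟨x, y⟩ := p
  have hc := (cos_arctan_pos y).ne'
  have harc : arcsin (sin (arctan y)) = arctan y :=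
    arcsin_sin (neg_pi_div_two_lt_arctan y).le (arctan_lt_pi_div_two y).le
  have hx : (((2 * x - 1) * cos (arctan y)) / cos (arctan y) + 1) / 2 = (x : ℝ) := by
    field_simp
    ring
  simp only [diskToStrip, stripToDisk, harc, hx, projIcc_val, tan_arctan]

lemma injective_stripToDisk : Injective stripToDisk :=
  LeftInverse.injective diskToStrip_stripToDisk

lemma stripToDisk_diskToStrip {w : ℂ} (hw : w ∈ diskMinusPoles) :
    stripToDisk (diskToStrip w) = w := by
  have hv := abs_im_lt_one_of_mem_diskMinusPoles hw
  obtain ⟨h₁, h₂⟩ := abs_lt.1 hv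
  have hc := cos_arcsin_pos hv
  have harc : arctan (tan (arcsin w.im)) = arcsin w.im :=
    arctan_tan (neg_pi_div_two_lt_arcsin.2 h₁) (arcsin_lt_pi_div_two.2 h₂)
  have hre : |w.re| ≤ cos (arcsin w.im) := by
    rw [cos_arcsin]
    refine abs_le_sqrt ?_
    have := Complex.sq_norm_eq_re_sq_add_im_sq w
    nlinarith [pow_le_one₀ (norm_nonneg w) (mem_closedBall_zero_iff.1 hw.1) (n := 2)]
  have hmem : (w.re / cos (arcsin w.im) + 1) / 2 ∈ Icc (0 : ℝ) 1 := by
    have : |w.re / cos (arcsin w.im)| ≤ 1 := by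
      rw [abs_div, abs_of_pos hc]
      exact div_le_one_of_le₀ hre hc.le
    constructor <;> linarith [(abs_le.1 this).1, (abs_le.1 this).2]
  apply Complex.ext
  · simp only [stripToDisk, diskToStrip, projIcc_of_mem _ hmem, harc]
    field_simp
    ring
  · simp only [stripToDisk, diskToStrip, harc, sin_arcsin h₁.le h₂.le]

lemma continuousOn_diskToStrip : ContinuousOn diskToStrip diskMinusPoles := by
  have hc (w : ℂ) (hw : w ∈ diskMinusPoles) : cos (arcsin w.im) ≠ 0 :=
    (cos_arcsin_pos (abs_im_lt_one_of_mem_diskMinusPoles hw)).ne'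
  refine ContinuousOn.prodMk (continuous_projIcc.comp_continuousOn ?_) ?_
  · exact ((Complex.continuous_re.continuousOn.div (by fun_prop) hc).add
      continuousOn_const).div_const 2
  · simp_rw [tan_eq_sin_div_cos]
    exact ContinuousOn.div (by fun_prop) (by fun_prop) hc

noncomputable def stripHomeomorphDiskMinusPoles : I × ℝ ≃ₜ diskMinusPoles where
  toFun p := ⟨stripToDisk p, stripToDisk_mem_diskMinusPoles p⟩
  invFun w := diskToStrip w
  left_inv := diskToStrip_stripToDisk
  right_inv w := Subtype.ext (stripToDisk_diskToStrip w.2)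
  continuous_toFun := continuous_stripToDisk.subtype_mk _
  continuous_invFun := continuousOn_iff_continuous_domRestrict.1 continuousOn_diskToStrip

lemma comap_stripToDisk_nhds_I : comap stripToDisk (𝓝 Complex.I) = comap Prod.snd atTop := by
  refine le_antisymm (tendsto_iff_comap.1 (tendsto_atTop.2 fun N => ?_))
    (tendsto_iff_comap.1 ?_)
  · have hN : sin (arctan N) < Complex.I.im := by
      simpa using (abs_lt.1 (abs_sin_arctan_lt_one N)).2
    filter_upwards [preimage_mem_comap
      ((isOpen_lt continuous_const Complex.continuous_im).mem_nhds hN)] with p hp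
    exact (sin_arctan_strictMono.lt_iff_lt.1 hp).le
  · refine tendsto_nhds_of_norm_le_one_of_tendsto_inner (by simp)
      (.of_forall norm_stripToDisk_le_one) ?_
    simp only [Complex.inner_I, stripToDisk]
    rw [← sin_pi_div_two]
    exact ((continuous_sin.tendsto _).comp
      (tendsto_arctan_atTop.mono_right nhdsWithin_le_nhds)).comp tendsto_comap

lemma comap_stripToDisk_nhds_neg_I :
    comap stripToDisk (𝓝 (-Complex.I)) = comap Prod.snd atBot := by
  refine le_antisymm (tendsto_iff_comap.1 (tendsto_atBot.2 fun N => ?_))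
    (tendsto_iff_comap.1 ?_)
  · have hN : (-Complex.I).im < sin (arctan N) := by
      simpa using (abs_lt.1 (abs_sin_arctan_lt_one N)).1
    filter_upwards [preimage_mem_comap
      ((isOpen_lt Complex.continuous_im continuous_const).mem_nhds hN)] with p hp
    exact (sin_arctan_strictMono.lt_iff_lt.1 hp).le
  · refine tendsto_nhds_of_norm_le_one_of_tendsto_inner (by simp)
      (.of_forall norm_stripToDisk_le_one) ?_
    simp only [Complex.inner_neg_I, stripToDisk]
    have h := (((continuous_sin.tendsto _).comp
      (tendsto_arctan_atBot.mono_right nhdsWithin_le_nhds)).comp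
      (tendsto_comap (f := @Prod.snd I ℝ))).neg
    rwa [sin_neg, sin_pi_div_two, neg_neg] at h

end DiskModel

section DiskExtension

noncomputable def diskExtension (g : I × ℝ → I × ℝ) : ℂ → ℂ :=
  extend stripToDisk (stripToDisk ∘ g) id

variable {g : I × ℝ → I × ℝ}

lemma diskExtension_stripToDisk (p : I × ℝ) :
    diskExtension g (stripToDisk p) = stripToDisk (g p) :=
  injective_stripToDisk.extend_apply _ _ p

lemma diskExtension_of_mem {w : ℂ} (hw : w ∈ diskMinusPoles) :
    diskExtension g w = stripToDisk (g (diskToStrip w)) := by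
  conv_lhs => rw [← stripToDisk_diskToStrip hw]
  exact diskExtension_stripToDisk _

lemma diskExtension_of_notMem {w : ℂ} (hw : w ∉ diskMinusPoles) : diskExtension g w = w :=
  extend_apply' _ _ _ fun ⟨p, hp⟩ => hw (hp ▸ stripToDisk_mem_diskMinusPoles p)

lemma diskExtension_of_one_le_norm (hg₀ : ∀ y, g (0, y) = (0, y))
    (hg₁ : ∀ y, g (1, y) = (1, y)) {w : ℂ} (hw : 1 ≤ ‖w‖) : diskExtension g w = w := by
  by_cases hmem : w ∈ diskMinusPoles
  · rw [diskExtension_of_mem hmem]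
    have hp : ‖stripToDisk (diskToStrip w)‖ = 1 := by
      rw [stripToDisk_diskToStrip hmem]
      exact le_antisymm (mem_closedBall_zero_iff.1 hmem.1) hw
    have hgp : g (diskToStrip w) = diskToStrip w := by
      rw [← Prod.mk.eta (p := diskToStrip w)]
      rcases fst_eq_zero_or_one_of_norm_stripToDisk_eq_one hp with h | h <;> rw [h]
      exacts [hg₀ _, hg₁ _]
    rw [hgp, stripToDisk_diskToStrip hmem]
  · exact diskExtension_of_notMem hmem

lemma diskExtension_leftInverse {g' : I × ℝ → I × ℝ} (hgg : LeftInverse g' g) :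
    LeftInverse (diskExtension g') (diskExtension g) := by
  intro w
  by_cases hw : w ∈ diskMinusPoles
  · rw [← stripToDisk_diskToStrip hw, diskExtension_stripToDisk, diskExtension_stripToDisk, hgg]
  · rw [diskExtension_of_notMem hw, diskExtension_of_notMem hw]

lemma continuousWithinAt_diskExtension_ball_of_notMem {u : ℂ} (hu : u ∉ diskMinusPoles)
    {L : Filter ℝ} (huL : comap stripToDisk (𝓝 u) = comap Prod.snd L)
    (hgL : Tendsto g (comap Prod.snd L) (comap Prod.snd L)) :
    ContinuousWithinAt (diskExtension g) (ball 0 1) u := by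
  have hr : Tendsto diskToStrip (𝓝[ball 0 1] u) (comap Prod.snd L) := by
    rw [← huL, tendsto_comap_iff]
    refine (tendsto_id.mono_left nhdsWithin_le_nhds).congr' ?_
    exact eventually_nhdsWithin_of_forall fun w hw =>
      (stripToDisk_diskToStrip (ball_subset_diskMinusPoles hw)).symm
  rw [ContinuousWithinAt, diskExtension_of_notMem hu]
  exact ((huL ▸ tendsto_comap : Tendsto stripToDisk _ (𝓝 u)).comp (hgL.comp hr)).congr'
    (eventually_nhdsWithin_of_forall fun w hw =>
      (diskExtension_of_mem (ball_subset_diskMinusPoles hw)).symm)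

lemma tendsto_comap_snd_of_apply_zero_eq {g : (I × ℝ) ≃ₜ (I × ℝ)}
    (hg₀ : ∀ y, g (0, y) = (0, y)) :
    Tendsto g (comap Prod.snd atTop) (comap Prod.snd atTop) ∧
      Tendsto g (comap Prod.snd atBot) (comap Prod.snd atBot) := by
  have hK : IsProperMap (Prod.snd ∘ g) := isProperMap_snd_of_compactSpace.comp g.isProperMap
  have hK₀ (y : ℝ) : (Prod.snd ∘ g) (0, y) = y := by simp [hg₀]
  exact ⟨tendsto_comap_iff.2 (tendsto_comap_snd_atTop_of_isProperMap hK hK₀),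
    tendsto_comap_iff.2 (tendsto_comap_snd_atBot_of_isProperMap hK hK₀)⟩

lemma continuous_diskExtension {g : (I × ℝ) ≃ₜ (I × ℝ)} (hg₀ : ∀ y, g (0, y) = (0, y))
    (hg₁ : ∀ y, g (1, y) = (1, y)) : Continuous (diskExtension g) := by
  refine continuous_iff_continuousAt.2 fun w => ?_
  rw [← continuousWithinAt_univ, ← union_compl_self (ball (0 : ℂ) 1), continuousWithinAt_union]
  refine ⟨?_, ?_⟩
  · by_cases hw : w ∈ diskMinusPoles
    · exact ((((continuous_stripToDisk.comp g.continuous).comp_continuousOn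
        continuousOn_diskToStrip) w hw).mono ball_subset_diskMinusPoles).congr
        (fun w' hw' => diskExtension_of_mem (ball_subset_diskMinusPoles hw'))
        (diskExtension_of_mem hw)
    by_cases hw₁ : w ∈ closedBall 0 1
    · have hends := tendsto_comap_snd_of_apply_zero_eq hg₀
      obtain rfl | rfl : w = Complex.I ∨ w = -Complex.I := by
        simpa [diskMinusPoles, hw₁, or_iff_not_imp_left] using hw
      · exact continuousWithinAt_diskExtension_ball_of_notMem hw comap_stripToDisk_nhds_I
          hends.1
      · exact continuousWithinAt_diskExtension_ball_of_notMem hw comap_stripToDisk_nhds_neg_I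
          hends.2
    · exact continuousWithinAt_of_notMem_closure (by rwa [closure_ball _ one_ne_zero])
  · by_cases hw : w ∈ (ball (0 : ℂ) 1)ᶜ
    · have hid : EqOn (diskExtension g) id (ball (0 : ℂ) 1)ᶜ := fun w' hw' =>
        diskExtension_of_one_le_norm hg₀ hg₁ (by simpa using hw')
      exact continuousWithinAt_id.congr hid (hid hw)
    · exact continuousWithinAt_of_notMem_closure
        (by rwa [isOpen_ball.isClosed_compl.closure_eq])

noncomputable def diskExtensionHomeomorph (g : (I × ℝ) ≃ₜ (I × ℝ))
    (hg₀ : ∀ y, g (0, y) = (0, y)) (hg₁ : ∀ y, g (1, y) = (1, y)) : ℂ ≃ₜ ℂ where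
  toFun := diskExtension g
  invFun := diskExtension g.symm
  left_inv := diskExtension_leftInverse g.symm_apply_apply
  right_inv := diskExtension_leftInverse g.apply_symm_apply
  continuous_toFun := continuous_diskExtension hg₀ hg₁
  continuous_invFun := continuous_diskExtension (fun y => g.symm_apply_eq.2 (hg₀ y).symm)
    (fun y => g.symm_apply_eq.2 (hg₁ y).symm)

end DiskExtension

theorem exists_isIsotopy_of_apply_boundary_eq (g : (I × ℝ) ≃ₜ (I × ℝ))
    (hg₀ : ∀ y, g (0, y) = (0, y)) (hg₁ : ∀ y, g (1, y) = (1, y)) :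
    ∃ G : I × (I × ℝ) → I × ℝ, IsIsotopy G ∧ (∀ p, G (0, p) = p) ∧ ∀ p, G (1, p) = g p := by
  set ĝ := diskExtensionHomeomorph g hg₀ hg₁
  have hfix (w : ℂ) (hw : 1 ≤ ‖w‖) : ĝ w = w := diskExtension_of_one_le_norm hg₀ hg₁ hw
  have hpoles : ∀ w ∈ ({Complex.I, -Complex.I} : Set ℂ), 1 ≤ ‖w‖ := by simp
  refine ⟨_, (isIsotopy_alexanderIsotopy ĝ hfix).conj stripHomeomorphDiskMinusPoles
    (alexanderIsotopy_mem_closedBall_diff_iff ĝ hfix hpoles), fun p => ?_, fun p => ?_⟩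
  · simp [alexanderIsotopy_zero]
  · rw [Homeomorph.symm_apply_eq]
    ext
    simp only [alexanderIsotopy_one hfix]
    exact diskExtension_stripToDisk p

theorem homeomorph_strip_properly_homotopic_to_id_isotopic_to_id_general
    (h : Homeomorph (I × ℝ) (I × ℝ))
    (H : I × (I × ℝ) → I × ℝ)
    (H0 : ∀ p, H (0, p) = h p)
    (H1 : ∀ p, H (1, p) = p)
    (Hproper : IsProperMap H)
    (Hbd : ∀ (t : I) (p : I × ℝ),
      ((p.1 : ℝ) = 0 ∨ (p.1 : ℝ) = 1) →
        (((H (t, p)).1 : ℝ) = 0 ∨ ((H (t, p)).1 : ℝ) = 1)) :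
    ∃ F : I × (I × ℝ) → I × ℝ, Continuous F ∧
      (∀ p, F (0, p) = h p) ∧
      (∀ p, F (1, p) = p) ∧
      (∀ t : I, IsHomeomorph fun p => F (t, p)) := by
  obtain ⟨φ₀, hφ₀⟩ := exists_orderIso_apply_boundary h H0 H1 Hproper Hbd (e := 0) (.inl rfl)
  obtain ⟨φ₁, hφ₁⟩ := exists_orderIso_apply_boundary h H0 H1 Hproper Hbd (e := 1) (.inr rfl)
  have hL := isIsotopy_straightening φ₀ φ₁
  set L := (hL.2 1).homeomorph
  obtain ⟨G, hG, hG₀, hG₁⟩ := exists_isIsotopy_of_apply_boundary_eq (h.trans L.symm)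
    (fun y => L.symm_apply_eq.2 ((hφ₀ y).trans (straightening_one_zero φ₀ φ₁ y).symm))
    (fun y => L.symm_apply_eq.2 ((hφ₁ y).trans (straightening_one_one φ₀ φ₁ y).symm))
  have hF := (hL.comp hG).symm
  refine ⟨_, hF.1, fun p => ?_, fun p => ?_, hF.2⟩
  · simp only [symm_zero, hG₁]
    exact L.apply_symm_apply (h p)
  · simp only [symm_one, hG₀, straightening_zero]

/-- Every homeomorphism of the doubly infinite closed strip `[0,1] × ℝ` that is properly
homotopic to the identity rel boundary is isotopic to the identity. -/
theorem homeomorph_strip_properly_homotopic_to_id_isotopic_to_id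
    (h : Homeomorph (I × ℝ) (I × ℝ))
    (H : I × (I × ℝ) → I × ℝ)
    (Hcont : Continuous H)
    (H0 : ∀ p, H (0, p) = h p)
    (H1 : ∀ p, H (1, p) = p)
    (Hproper : IsProperMap H)
    (Hbd : ∀ (t : I) (p : I × ℝ),
      ((p.1 : ℝ) = 0 ∨ (p.1 : ℝ) = 1) →
        (((H (t, p)).1 : ℝ) = 0 ∨ ((H (t, p)).1 : ℝ) = 1)) :
    ∃ F : I × (I × ℝ) → I × ℝ, Continuous F ∧
      (∀ p, F (0, p) = h p) ∧
      (∀ p, F (1, p) = p) ∧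
      (∀ t : I, IsHomeomorph fun p => F (t, p)) :=
  homeomorph_strip_properly_homotopic_to_id_isotopic_to_id_general h H H0 H1 Hproper Hbd
end
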